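/- Let q be a prime power and let C ⊆ 𝔽_q^{n×m} be a non-zero rank-metric code of dimension k and minimum distance d(C). Then trk(C) ≥ k + d(C) − 1. -/

import Mathlib

open Matrix

/-- The minimum (rank) distance of a rank-metric code. -/
noncomputable def minRankDist {F : Type*} [Field F] {n m : ℕ}
    (C : Submodule F (Matrix (Fin n) (Fin m) F)) : ℕ :=
  sInf {r : ℕ | ∃ M ∈ C, M ≠ 0 ∧ M.rank = r}

/-- The tensor rank of a rank-metric code `C`: the least `R` such that `C` is
contained in the span of `R` rank-one matrices. -/
noncomputable def trkCode {F : Type*} [Field F] {n m : ℕ}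
    (C : Submodule F (Matrix (Fin n) (Fin m) F)) : ℕ :=
  sInf {R : ℕ | ∃ A : Fin R → Matrix (Fin n) (Fin m) F,
    (∀ r, (A r).rank = 1) ∧ C ≤ Submodule.span F (Set.range A)}

/-!
Write `C ⊆ span (A₁, …, A_R)` with rank-one `Aᵢ` and lift `C` linearly to coefficient vectors
in `F^R`. A matrix whose coefficients vanish on a set `t` of `R - (d - 1)` indices is a sum of at
most `d - 1` rank-one matrices, so has rank `< d`; if it lies in `C` it is therefore zero. Hence
restricting coefficients to `t` is injective on `C`, and `dim C ≤ R - d + 1`.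
-/

open Finset Module

theorem Submodule.finrank_le_of_ker_inf_comap_le_ker {K V W U : Type*} [DivisionRing K]
    [AddCommGroup V] [Module K V] [AddCommGroup W] [Module K W] [AddCommGroup U] [Module K U]
    [FiniteDimensional K U] (π : V →ₗ[K] W) (ρ : V →ₗ[K] U) {C : Submodule K W}
    (hC : C ≤ LinearMap.range π) (h : LinearMap.ker ρ ⊓ C.comap π ≤ LinearMap.ker π) :
    finrank K C ≤ finrank K U := by
  let P := C.comap π
  let f : P →ₗ[K] C := (π.domRestrict P).codRestrict C fun p => p.2
  have hf : LinearMap.range f = ⊤ := by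
    rw [LinearMap.range_eq_top]
    rintro ⟨c, hc⟩
    obtain ⟨v, rfl⟩ := hC hc
    exact ⟨⟨v, hc⟩, rfl⟩
  obtain ⟨g, hg⟩ := f.exists_rightInverse_of_surjective hf
  refine LinearMap.finrank_le_finrank_of_injective (f := ρ ∘ₗ P.subtype ∘ₗ g) ?_
  rw [← LinearMap.ker_eq_bot, eq_bot_iff]
  intro c hc
  have hπ : π (g c) = c := congr_arg Subtype.val (LinearMap.congr_fun hg c)
  have := h ⟨hc, (g c).2⟩
  rw [LinearMap.mem_ker, LinearMap.comp_apply, Submodule.subtype_apply, hπ] at this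
  simpa using this

namespace Matrix

variable {K : Type*} [Field K] {m n : Type*} [Fintype n]

theorem rank_eq_zero_iff {M : Matrix m n K} : M.rank = 0 ↔ M = 0 := by
  classical
  rw [rank, Submodule.finrank_eq_zero, LinearMap.range_eq_bot, ← toLin'_apply',
    LinearEquiv.map_eq_zero_iff]

theorem rank_add_le (M N : Matrix m n K) : (M + N).rank ≤ M.rank + N.rank := by
  rw [rank, rank, rank, mulVecLin_add]
  exact (Submodule.finrank_mono (LinearMap.range_add_le _ _)).trans
    (Submodule.finrank_add_le_finrank_add_finrank _ _)

theorem rank_smul_le (c : K) (M : Matrix m n K) : (c • M).rank ≤ M.rank := by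
  classical
  simpa only [Matrix.mul_smul, Matrix.mul_one] using rank_mul_le_left M (c • (1 : Matrix n n K))

theorem rank_single_one [DecidableEq m] [DecidableEq n] (i : m) (j : n) :
    (single i j (1 : K)).rank = 1 := by
  refine le_antisymm (single_eq_single_vecMulVec_single (α := K) i j ▸ rank_vecMulVec_le _ _) ?_
  rw [Nat.one_le_iff_ne_zero, Ne, rank_eq_zero_iff, ← ext_iff.not]
  exact fun h => by simpa using h i j

theorem rank_linearCombination_le [DecidableEq K] {ι : Type*} [Fintype ι] (A : ι → Matrix m n K)
    (hA : ∀ i, (A i).rank ≤ 1) (v : ι → K) :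
    (Fintype.linearCombination K A v).rank ≤ #{i | v i ≠ 0} := by
  rw [Fintype.linearCombination_apply, ← sum_filter_of_ne (p := (v · ≠ 0))
    fun i _ h hv => h (by rw [hv, zero_smul])]
  calc (∑ i with v i ≠ 0, v i • A i).rank ≤ ∑ i with v i ≠ 0, (v i • A i).rank :=
        le_sum_of_subadditive (M := Matrix m n K) Matrix.rank (by rw [Matrix.rank_zero])
          rank_add_le _ _
    _ ≤ ∑ i with v i ≠ 0, 1 := sum_le_sum fun i _ => (rank_smul_le _ _).trans (hA i)
    _ = _ := by rw [sum_const, smul_eq_mul, mul_one]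

end Matrix

section RankMetricCode

variable {F : Type*} [Field F] {n m : ℕ} {C : Submodule F (Matrix (Fin n) (Fin m) F)}

theorem minRankDist_le_rank {M : Matrix (Fin n) (Fin m) F} (hM : M ∈ C) (hM0 : M ≠ 0) :
    minRankDist C ≤ M.rank :=
  Nat.sInf_le ⟨M, hM, hM0, rfl⟩

theorem one_le_minRankDist (hC : C ≠ ⊥) : 1 ≤ minRankDist C := by
  obtain ⟨M, hM, hM0⟩ := Submodule.exists_mem_ne_zero_of_ne_bot hC
  refine le_csInf ⟨_, M, hM, hM0, rfl⟩ ?_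
  rintro _ ⟨N, -, hN0, rfl⟩
  exact Nat.one_le_iff_ne_zero.2 (rank_eq_zero_iff.not.2 hN0)

theorem finrank_add_minRankDist_le_card {ι : Type*} [Fintype ι] (A : ι → Matrix (Fin n) (Fin m) F)
    (hA : ∀ i, (A i).rank ≤ 1) (hCA : C ≤ Submodule.span F (Set.range A)) (hC : C ≠ ⊥) :
    finrank F C + minRankDist C - 1 ≤ Fintype.card ι := by
  classical
  have hk : 0 < finrank F C := Nat.pos_of_ne_zero (Submodule.finrank_eq_zero.not.2 hC)
  have hd := one_le_minRankDist hC
  obtain ⟨t, -, ht⟩ := exists_subset_card_eq (s := (univ : Finset ι))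
    (n := Fintype.card ι - (minRankDist C - 1)) (by simp)
  have hkt : finrank F C ≤ #t := by
    refine (Submodule.finrank_le_of_ker_inf_comap_le_ker (Fintype.linearCombination F A)
      (LinearMap.funLeft F F ((↑) : t → ι)) (by rwa [Fintype.range_linearCombination]) ?_).trans
      (by simp)
    rintro v ⟨hv, hvC⟩
    by_contra hne
    have hsupp : #{i | v i ≠ 0} ≤ #tᶜ := card_le_card fun i hi => by
      simp only [mem_filter, mem_univ, true_and, mem_compl] at hi ⊢
      exact fun hit => hi (congr_fun hv ⟨i, hit⟩)
    have := rank_linearCombination_le A hA v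
    have := minRankDist_le_rank hvC hne
    rw [card_compl] at hsupp
    omega
  omega

variable (C) in
theorem exists_span_rankOne_trkCode : ∃ A : Fin (trkCode C) → Matrix (Fin n) (Fin m) F,
    (∀ r, (A r).rank = 1) ∧ C ≤ Submodule.span F (Set.range A) := by
  classical
  let b := (stdBasis F (Fin n) (Fin m)).reindex (Fintype.equivFin _)
  have hne : {R : ℕ | ∃ A : Fin R → Matrix (Fin n) (Fin m) F,
      (∀ r, (A r).rank = 1) ∧ C ≤ Submodule.span F (Set.range A)}.Nonempty :=
    ⟨_, b, fun r => by rw [Basis.reindex_apply, stdBasis_eq_single, rank_single_one],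
      b.span_eq ▸ le_top⟩
  exact Nat.sInf_mem hne

end RankMetricCode

theorem tensorRank_bound_general {F : Type*} [Field F] {n m : ℕ}
    (C : Submodule F (Matrix (Fin n) (Fin m) F)) (hC : C ≠ ⊥) :
    Module.finrank F C + minRankDist C - 1 ≤ trkCode C := by
  obtain ⟨A, hA, hCA⟩ := exists_span_rankOne_trkCode C
  simpa using finrank_add_minRankDist_le_card A (fun r => (hA r).le) hCA hC

/-- The tensor-rank bound (Kruskal): for a non-zero rank-metric code `C` of dimension
`k` and minimum distance `d`, `trk(C) ≥ k + d - 1`. -/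
theorem tensorRank_bound {F : Type*} [Field F] [Fintype F] {n m : ℕ}
    (C : Submodule F (Matrix (Fin n) (Fin m) F)) (hC : C ≠ ⊥) :
    Module.finrank F C + minRankDist C - 1 ≤ trkCode C :=
  tensorRank_bound_general C hC
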